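/- arXiv:2509.18149 — 5 statements merged into one kernel-verified Lean document; each statement's English description precedes it below -/
import Mathlib

section
/- Let M be a J×K real matrix of rank R, partitioned as a 3×2 block matrix with blocks M11, M12 (top row), M21, M22 (middle row), M33, M32 (bottom row), where the observed submatrices are M1 = [M11; M21] and M2 = [M22; M32] sharing the middle block rows. If rank(M1) = rank(M21) = rank([M21 M22]) = rank(M22) = rank(M2) = R, then the column space of M equals the column space of M1 (equivalently, col(M) is uniquely determined by the observed blocks). -/
/-!
Because rank [M21 M22] = rank M, the rows of M lie in the row space V of the observed middle
block row [M21 M22], and so do the rows of any rank-R matrix M' agreeing with M on the observed blocks.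
Because rank M21 = rank M22 = dim V, restricting to either column block is injective on V, so
each top row is determined by its M11 part and each bottom row by its M32 part: M' = M.
-/

open Matrix

namespace Matrix

variable {K : Type*} [Field K] {m n p : Type*} [Fintype n]

theorem span_row_submatrix_eq_of_rank_eq [Finite m] [Finite p] (N : Matrix m n K) (e : p → m)
    (h : (N.submatrix e id).rank = N.rank) :
    Submodule.span K (Set.range (N.submatrix e id).row) = Submodule.span K (Set.range N.row) := by
  refine Submodule.eq_of_le_of_finrank_eq (Submodule.span_mono ?_) ?_
  · rintro _ ⟨i, rfl⟩
    exact ⟨e i, rfl⟩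
  · rw [← rank_eq_finrank_span_row, ← rank_eq_finrank_span_row, h]

theorem injOn_comp_span_row_of_rank_submatrix_eq [Fintype p] [Finite m] (N : Matrix m n K)
    (g : p → n) (h : (N.submatrix id g).rank = N.rank) :
    Set.InjOn (· ∘ g) (Submodule.span K (Set.range N.row) : Set (n → K)) := by
  set V := Submodule.span K (Set.range N.row)
  set f := (LinearMap.funLeft K K g).domRestrict V
  have hrange : Module.finrank K f.range = Module.finrank K V := by
    rw [LinearMap.range_domRestrict, Submodule.map_span, ← Set.range_comp]
    exact (rank_eq_finrank_span_row (N.submatrix id g)).symm.trans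
      (h.trans (rank_eq_finrank_span_row N))
  have hinj : Function.Injective f := by
    rw [← LinearMap.injective_rangeRestrict_iff,
      LinearMap.injective_iff_surjective_of_finrank_eq_finrank hrange.symm]
    exact f.surjective_rangeRestrict
  intro x hx y hy hxy
  simpa using @hinj ⟨x, hx⟩ ⟨y, hy⟩ hxy

end Matrix

theorem stmt0_general (J1 J2 J3 K1 K2 R : ℕ)
    (M M' : Matrix (Fin J1 ⊕ Fin J2 ⊕ Fin J3) (Fin K1 ⊕ Fin K2) ℝ)
    (hM : M.rank = R) (hM' : M'.rank = R)
    -- rank conditions on the observed submatrices of M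
    (hM21 : (Matrix.of fun (i : Fin J2) (j : Fin K1) =>
      M (Sum.inr (Sum.inl i)) (Sum.inl j)).rank = R)
    (hM2122 : (Matrix.of fun (i : Fin J2) (j : Fin K1 ⊕ Fin K2) =>
      M (Sum.inr (Sum.inl i)) j).rank = R)
    (hM22 : (Matrix.of fun (i : Fin J2) (j : Fin K2) =>
      M (Sum.inr (Sum.inl i)) (Sum.inr j)).rank = R)
    -- M and M' agree on the observed blocks
    (hobs11 : ∀ (i : Fin J1) (j : Fin K1), M (Sum.inl i) (Sum.inl j) = M' (Sum.inl i) (Sum.inl j))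
    (hobs21 : ∀ (i : Fin J2) (j : Fin K1),
      M (Sum.inr (Sum.inl i)) (Sum.inl j) = M' (Sum.inr (Sum.inl i)) (Sum.inl j))
    (hobs22 : ∀ (i : Fin J2) (j : Fin K2),
      M (Sum.inr (Sum.inl i)) (Sum.inr j) = M' (Sum.inr (Sum.inl i)) (Sum.inr j))
    (hobs32 : ∀ (i : Fin J3) (j : Fin K2),
      M (Sum.inr (Sum.inr i)) (Sum.inr j) = M' (Sum.inr (Sum.inr i)) (Sum.inr j)) :
    LinearMap.range M.mulVecLin = LinearMap.range M'.mulVecLin := by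
  suffices M = M' by rw [this]
  let mid : Fin J2 → Fin J1 ⊕ Fin J2 ⊕ Fin J3 := fun i => Sum.inr (Sum.inl i)
  let N := M.submatrix mid id
  have hN' : M'.submatrix mid id = N := by
    ext i (j | j)
    exacts [(hobs21 i j).symm, (hobs22 i j).symm]
  have hN : N.rank = R := hM2122
  have hrow : ∀ i, M i ∈ Submodule.span ℝ (Set.range N.row) := fun i => by
    rw [span_row_submatrix_eq_of_rank_eq M mid (hN.trans hM.symm)]
    exact Submodule.subset_span ⟨i, rfl⟩
  have hrow' : ∀ i, M' i ∈ Submodule.span ℝ (Set.range N.row) := fun i => by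
    rw [← hN', span_row_submatrix_eq_of_rank_eq M' mid (by rw [hN', hN, hM'])]
    exact Submodule.subset_span ⟨i, rfl⟩
  have hleft := injOn_comp_span_row_of_rank_submatrix_eq N Sum.inl (hM21.trans hN.symm)
  have hright := injOn_comp_span_row_of_rank_submatrix_eq N Sum.inr (hM22.trans hN.symm)
  funext i
  rcases i with i | i | i
  · exact hleft (hrow _) (hrow' _) (funext (hobs11 i))
  · exact congrFun hN' i |>.symm
  · exact hright (hrow _) (hrow' _) (funext (hobs32 i))

/-- If the two observed overlapping submatrices of a rank-`R` block matrix
satisfy the rank-overlap conditions, then the column space of the matrix is uniquely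
determined by the observed blocks: any two rank-`R` matrices agreeing on the observed
blocks have the same column space. -/
theorem stmt0 (J1 J2 J3 K1 K2 R : ℕ)
    (M M' : Matrix (Fin J1 ⊕ Fin J2 ⊕ Fin J3) (Fin K1 ⊕ Fin K2) ℝ)
    (hM : M.rank = R) (hM' : M'.rank = R)
    -- rank conditions on the observed submatrices of M
    (hM1 : (Matrix.of fun (i : Fin J1 ⊕ Fin J2) (j : Fin K1) =>
      M (Sum.elim Sum.inl (Sum.inr ∘ Sum.inl) i) (Sum.inl j)).rank = R)
    (hM21 : (Matrix.of fun (i : Fin J2) (j : Fin K1) =>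
      M (Sum.inr (Sum.inl i)) (Sum.inl j)).rank = R)
    (hM2122 : (Matrix.of fun (i : Fin J2) (j : Fin K1 ⊕ Fin K2) =>
      M (Sum.inr (Sum.inl i)) j).rank = R)
    (hM22 : (Matrix.of fun (i : Fin J2) (j : Fin K2) =>
      M (Sum.inr (Sum.inl i)) (Sum.inr j)).rank = R)
    (hM2 : (Matrix.of fun (i : Fin J2 ⊕ Fin J3) (j : Fin K2) =>
      M (Sum.inr i) (Sum.inr j)).rank = R)
    -- M and M' agree on the observed blocks
    (hobs11 : ∀ (i : Fin J1) (j : Fin K1), M (Sum.inl i) (Sum.inl j) = M' (Sum.inl i) (Sum.inl j))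
    (hobs21 : ∀ (i : Fin J2) (j : Fin K1),
      M (Sum.inr (Sum.inl i)) (Sum.inl j) = M' (Sum.inr (Sum.inl i)) (Sum.inl j))
    (hobs22 : ∀ (i : Fin J2) (j : Fin K2),
      M (Sum.inr (Sum.inl i)) (Sum.inr j) = M' (Sum.inr (Sum.inl i)) (Sum.inr j))
    (hobs32 : ∀ (i : Fin J3) (j : Fin K2),
      M (Sum.inr (Sum.inr i)) (Sum.inr j) = M' (Sum.inr (Sum.inr i)) (Sum.inr j)) :
    LinearMap.range M.mulVecLin = LinearMap.range M'.mulVecLin :=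
  stmt0_general J1 J2 J3 K1 K2 R M M' hM hM' hM21 hM2122 hM22 hobs11 hobs21 hobs22 hobs32
end

section
/- Let S_1, …, S_L be subspaces of ℝ^J with orthonormal bases stored in matrices Q_1, …, Q_L, and let Q = [Q_1 ⋯ Q_L] be their horizontal concatenation. Then a vector v ∈ ℝ^J lies in ∩_{l=1}^L S_l if and only if v is a left singular vector of Q with singular value √L; equivalently, QQᵀ v = L·v if and only if v ∈ ∩_l S_l. -/
open Matrix

lemma dot_proj (J r : ℕ) (M : Matrix (Fin J) (Fin r) ℝ) (v : Fin J → ℝ) :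
    v ⬝ᵥ (M * Mᵀ).mulVec v = (Mᵀ.mulVec v) ⬝ᵥ (Mᵀ.mulVec v) := by
  rw [← Matrix.mulVec_mulVec, Matrix.dotProduct_mulVec, ← Matrix.mulVec_transpose]

lemma proj_norm (J r : ℕ) (M : Matrix (Fin J) (Fin r) ℝ) (h : Mᵀ * M = 1) (v : Fin J → ℝ) :
    ((M * Mᵀ).mulVec v) ⬝ᵥ ((M * Mᵀ).mulVec v) = (Mᵀ.mulVec v) ⬝ᵥ (Mᵀ.mulVec v) := by
  rw [← Matrix.mulVec_mulVec, Matrix.dotProduct_mulVec, ← Matrix.mulVec_transpose,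
    Matrix.mulVec_mulVec, Matrix.mulVec_mulVec, h, Matrix.one_mul]

lemma dp_self_nonneg (n : ℕ) (w : Fin n → ℝ) : 0 ≤ w ⬝ᵥ w :=
  Finset.sum_nonneg fun _ _ => mul_self_nonneg _

lemma proj_fix (J r : ℕ) (M : Matrix (Fin J) (Fin r) ℝ) (h : Mᵀ * M = 1) (v : Fin J → ℝ)
    (heq : v ⬝ᵥ (M * Mᵀ).mulVec v = v ⬝ᵥ v) : (M * Mᵀ).mulVec v = v := by
  set p := (M * Mᵀ).mulVec v with hp
  have h0 : (v - p) ⬝ᵥ (v - p) = 0 := by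
    have h1 : p ⬝ᵥ p = v ⬝ᵥ p := by rw [proj_norm J r M h v, ← dot_proj J r M v]
    have h2 : p ⬝ᵥ v = v ⬝ᵥ p := dotProduct_comm _ _
    simp only [sub_dotProduct, dotProduct_sub]
    rw [h1, h2, heq]; ring
  have := dotProduct_self_eq_zero.mp h0
  exact (sub_eq_zero.mp this).symm

lemma proj_le (J r : ℕ) (M : Matrix (Fin J) (Fin r) ℝ) (h : Mᵀ * M = 1) (v : Fin J → ℝ) :
    v ⬝ᵥ (M * Mᵀ).mulVec v ≤ v ⬝ᵥ v := by
  set p := (M * Mᵀ).mulVec v with hp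
  have h0 : 0 ≤ (v - p) ⬝ᵥ (v - p) := dp_self_nonneg _ _
  have h1 : p ⬝ᵥ p = v ⬝ᵥ p := by rw [proj_norm J r M h v, ← dot_proj J r M v]
  have h2 : p ⬝ᵥ v = v ⬝ᵥ p := dotProduct_comm _ _
  simp only [sub_dotProduct, dotProduct_sub] at h0
  rw [h1, h2] at h0
  linarith

lemma dp_sum {ι : Type*} [Fintype ι] (J : ℕ) (v : Fin J → ℝ) (w : ι → Fin J → ℝ) :
    v ⬝ᵥ (∑ l, w l) = ∑ l, v ⬝ᵥ w l := by
  simp only [dotProduct, Finset.sum_apply, Finset.mul_sum]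
  exact Finset.sum_comm

/-- Let `S l = col (Q l)` where each `Q l` has orthonormal columns, and let
`Q` be the horizontal concatenation of the `Q l`. Then for `v ∈ ℝ^J`:
`Q Qᵀ v = L • v` if and only if `v ∈ ⋂ l, S l` (i.e. `v` is a left singular vector of
`Q` with singular value `√L`). -/
theorem stmt4 (J L : ℕ) (r : Fin L → ℕ)
    (Q : (l : Fin L) → Matrix (Fin J) (Fin (r l)) ℝ)
    (horth : ∀ l, (Q l)ᵀ * Q l = 1)
    (v : Fin J → ℝ) :
    ((Matrix.of fun (i : Fin J) (p : (l : Fin L) × Fin (r l)) => Q p.1 i p.2) *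
        (Matrix.of fun (i : Fin J) (p : (l : Fin L) × Fin (r l)) => Q p.1 i p.2)ᵀ).mulVec v
      = (L : ℝ) • v
    ↔ v ∈ ⨅ l, LinearMap.range (Q l).mulVecLin := by
  have hA : ((Matrix.of fun (i : Fin J) (p : (l : Fin L) × Fin (r l)) => Q p.1 i p.2) *
        (Matrix.of fun (i : Fin J) (p : (l : Fin L) × Fin (r l)) => Q p.1 i p.2)ᵀ)
      = ∑ l, Q l * (Q l)ᵀ := by
    ext i j
    simp only [Matrix.mul_apply, Matrix.transpose_apply, Matrix.of_apply, Matrix.sum_apply]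
    rw [← Finset.univ_sigma_univ, Finset.sum_sigma]
  rw [hA]
  have hsumv : (∑ l, Q l * (Q l)ᵀ).mulVec v = ∑ l, (Q l * (Q l)ᵀ).mulVec v := by
    ext i
    simp only [Matrix.mulVec, dotProduct, Matrix.sum_apply, Finset.sum_apply,
      Finset.sum_mul]
    exact Finset.sum_comm
  rw [hsumv]
  simp only [Submodule.mem_iInf, LinearMap.mem_range]
  constructor
  · intro hsum l
    have hdot : ∑ l, v ⬝ᵥ (Q l * (Q l)ᵀ).mulVec v = (L : ℝ) * (v ⬝ᵥ v) := by
      rw [← dp_sum, hsum]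
      simp [dotProduct_smul, smul_eq_mul]
    have hall : ∀ l ∈ Finset.univ, v ⬝ᵥ (Q l * (Q l)ᵀ).mulVec v = v ⬝ᵥ v := by
      rw [← Finset.sum_eq_sum_iff_of_le (fun i _ => proj_le J (r i) (Q i) (horth i) v)]
      rw [hdot]
      simp [Finset.card_univ, mul_comm]
    have hfix := proj_fix J (r l) (Q l) (horth l) v (hall l (Finset.mem_univ l))
    exact ⟨(Q l)ᵀ.mulVec v, by rw [Matrix.mulVecLin_apply, Matrix.mulVec_mulVec]; exact hfix⟩
  · intro hmem
    have hfix : ∀ l, (Q l * (Q l)ᵀ).mulVec v = v := by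
      intro l
      obtain ⟨x, hx⟩ := hmem l
      rw [Matrix.mulVecLin_apply] at hx
      rw [← hx, Matrix.mulVec_mulVec, Matrix.mul_assoc, horth l, Matrix.mul_one]
    simp only [hfix, Finset.sum_const, Finset.card_univ, Fintype.card_fin]
    ext i
    simp [mul_comm]
end

section
/- For matrices Q_1, …, Q_L ∈ ℝ^{J×r_l} each with orthonormal columns, every singular value of the concatenation Q = [Q_1 ⋯ Q_L] is at most √L, and the multiplicity of the singular value √L equals dim(∩_{l=1}^L col(Q_l)). -/
/-!
Each `Q l * (Q l)ᵀ` is the orthogonal projection onto `col (Q l)`, so by Pythagoras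
`xᵀ Q Qᵀ x = ∑ l, ‖(Q l)ᵀ x‖² ≤ L ‖x‖²`, with equality exactly when `x` lies in every
`col (Q l)`. Hence the eigenvalues of the symmetric matrix `Q Qᵀ` are at most `L`, its
`L`-eigenspace is `⋂ l, col (Q l)`, and since `Q Qᵀ` is diagonalizable the multiplicity of the
eigenvalue `L` is the dimension of that eigenspace.
-/

open Matrix Module

namespace Matrix

theorem IsHermitian.card_eigenvalues_eq_finrank_eigenspace {𝕜 : Type*} [RCLike 𝕜]
    {n : Type*} [Fintype n] [DecidableEq n] {A : Matrix n n 𝕜} (hA : A.IsHermitian) (μ : ℝ) :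
    Fintype.card {i // hA.eigenvalues i = μ} = finrank 𝕜 (End.eigenspace A.mulVecLin μ) := by
  have hT := isSymmetric_toEuclideanLin_iff.mpr hA
  have hspace : End.eigenspace A.mulVecLin μ =
      (End.eigenspace (toEuclideanLin A) μ).map
        (WithLp.linearEquiv 2 𝕜 (n → 𝕜) : EuclideanSpace 𝕜 n →ₗ[𝕜] n → 𝕜) := by
    ext x
    rw [Submodule.mem_map_equiv, End.mem_eigenspace_iff, End.mem_eigenspace_iff]
    simp [WithLp.ext_iff]
  rw [hspace, LinearEquiv.finrank_map_eq,
    ← hT.card_filter_eigenvalues_eq finrank_euclideanSpace (μ : 𝕜), ← Fintype.card_subtype]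
  refine Fintype.card_congr ((Fintype.equivOfCardEq (Fintype.card_fin _)).symm.subtypeEquiv ?_)
  intro i
  simp [IsHermitian.eigenvalues, IsHermitian.eigenvalues₀]

theorem IsHermitian.eigenvalues_le_of_dotProduct_mulVec_le {n : Type*} [Fintype n]
    [DecidableEq n] {A : Matrix n n ℝ} (hA : A.IsHermitian) {c : ℝ}
    (h : ∀ x, x ⬝ᵥ (A *ᵥ x) ≤ c * (x ⬝ᵥ x)) (i : n) : hA.eigenvalues i ≤ c := by
  set v : n → ℝ := ⇑(hA.eigenvectorBasis i)
  have hv : v ⬝ᵥ v = 1 := by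
    have h1 := real_inner_self_eq_norm_sq (hA.eigenvectorBasis i)
    rw [hA.eigenvectorBasis.orthonormal.1 i, EuclideanSpace.inner_eq_star_dotProduct,
      star_trivial] at h1
    simpa using h1
  simpa [v, hA.mulVec_eigenvectorBasis i, dotProduct_smul, hv] using h v

section Orthonormal

variable {m k : Type*} [Fintype m] [Fintype k] [DecidableEq k] {Q : Matrix m k ℝ}

theorem dotProduct_self_eq_add_of_transpose_mul_self_eq_one (hQ : Qᵀ * Q = 1) (x : m → ℝ) :
    x ⬝ᵥ x = (Qᵀ *ᵥ x) ⬝ᵥ (Qᵀ *ᵥ x) + (x - Q *ᵥ Qᵀ *ᵥ x) ⬝ᵥ (x - Q *ᵥ Qᵀ *ᵥ x) := by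
  set y := Qᵀ *ᵥ x
  have hQy : (Q *ᵥ y) ⬝ᵥ (Q *ᵥ y) = y ⬝ᵥ y := by
    rw [dotProduct_mulVec, ← mulVec_transpose, mulVec_mulVec, hQ, one_mulVec]
  have hxQy : x ⬝ᵥ (Q *ᵥ y) = y ⬝ᵥ y := by
    rw [dotProduct_mulVec, ← mulVec_transpose]
  rw [sub_dotProduct, dotProduct_sub, dotProduct_sub, hQy, hxQy, dotProduct_comm (Q *ᵥ y), hxQy]
  ring

theorem transpose_mulVec_dotProduct_self_le (hQ : Qᵀ * Q = 1) (x : m → ℝ) :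
    (Qᵀ *ᵥ x) ⬝ᵥ (Qᵀ *ᵥ x) ≤ x ⬝ᵥ x := by
  rw [dotProduct_self_eq_add_of_transpose_mul_self_eq_one hQ x]
  exact le_add_of_nonneg_right (Fintype.sum_nonneg fun _ => mul_self_nonneg _)

theorem mulVec_transpose_mulVec_eq_self_iff (hQ : Qᵀ * Q = 1) (x : m → ℝ) :
    Q *ᵥ Qᵀ *ᵥ x = x ↔ x ∈ LinearMap.range Q.mulVecLin := by
  refine ⟨fun hx => ⟨Qᵀ *ᵥ x, hx⟩, ?_⟩
  rintro ⟨y, rfl⟩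
  rw [mulVecLin_apply, mulVec_mulVec y Qᵀ Q, hQ, one_mulVec]

theorem transpose_mulVec_dotProduct_self_eq_iff (hQ : Qᵀ * Q = 1) (x : m → ℝ) :
    (Qᵀ *ᵥ x) ⬝ᵥ (Qᵀ *ᵥ x) = x ⬝ᵥ x ↔ x ∈ LinearMap.range Q.mulVecLin := by
  conv_lhs => rw [dotProduct_self_eq_add_of_transpose_mul_self_eq_one hQ x]
  rw [left_eq_add, dotProduct_self_eq_zero, sub_eq_zero, eq_comm,
    mulVec_transpose_mulVec_eq_self_iff hQ]

end Orthonormal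

def sigmaFromCols {m ι R : Type*} {κ : ι → Type*} (Q : (i : ι) → Matrix m (κ i) R) :
    Matrix m (Σ i, κ i) R :=
  of fun a p => Q p.1 a p.2

section SigmaFromCols

variable {m ι : Type*} [Fintype ι] {κ : ι → Type*} [∀ i, Fintype (κ i)]

theorem sigmaFromCols_mul_transpose {R : Type*} [AddCommMonoid R] [Mul R]
    (Q : (i : ι) → Matrix m (κ i) R) :
    sigmaFromCols Q * (sigmaFromCols Q)ᵀ = ∑ i, Q i * (Q i)ᵀ := by
  ext a b
  simp only [sigmaFromCols, sum_apply, mul_apply, transpose_apply, of_apply]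
  exact Fintype.sum_sigma _

variable [Fintype m] {Q : (i : ι) → Matrix m (κ i) ℝ}

theorem dotProduct_sum_mul_transpose_mulVec (x : m → ℝ) :
    x ⬝ᵥ ((∑ i, Q i * (Q i)ᵀ) *ᵥ x) = ∑ i, ((Q i)ᵀ *ᵥ x) ⬝ᵥ ((Q i)ᵀ *ᵥ x) := by
  rw [sum_mulVec, dotProduct_sum]
  refine Finset.sum_congr rfl fun i _ => ?_
  rw [← mulVec_mulVec, dotProduct_mulVec, ← mulVec_transpose]

variable [∀ i, DecidableEq (κ i)]

theorem dotProduct_sum_mul_transpose_mulVec_le (hQ : ∀ i, (Q i)ᵀ * Q i = 1) (x : m → ℝ) :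
    x ⬝ᵥ ((∑ i, Q i * (Q i)ᵀ) *ᵥ x) ≤ Fintype.card ι * (x ⬝ᵥ x) := by
  rw [dotProduct_sum_mul_transpose_mulVec, ← nsmul_eq_mul, ← Finset.card_univ,
    ← Finset.sum_const]
  exact Finset.sum_le_sum fun i _ => transpose_mulVec_dotProduct_self_le (hQ i) x

theorem eigenspace_sum_mul_transpose_card (hQ : ∀ i, (Q i)ᵀ * Q i = 1) :
    End.eigenspace (∑ i, Q i * (Q i)ᵀ).mulVecLin (Fintype.card ι) =
      ⨅ i, LinearMap.range (Q i).mulVecLin := by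
  ext x
  rw [End.mem_eigenspace_iff, Submodule.mem_iInf, mulVecLin_apply]
  constructor
  · intro hx i
    rw [← transpose_mulVec_dotProduct_self_eq_iff (hQ i)]
    have hsum : ∑ i, ((Q i)ᵀ *ᵥ x) ⬝ᵥ ((Q i)ᵀ *ᵥ x) = ∑ _i : ι, x ⬝ᵥ x := by
      rw [← dotProduct_sum_mul_transpose_mulVec, hx, Finset.sum_const, Finset.card_univ,
        dotProduct_smul, nsmul_eq_mul, smul_eq_mul]
    exact (Finset.sum_eq_sum_iff_of_le fun i _ => transpose_mulVec_dotProduct_self_le (hQ i) x).1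
      hsum i (Finset.mem_univ i)
  · intro hx
    simp_rw [sum_mulVec, ← mulVec_mulVec, (mulVec_transpose_mulVec_eq_self_iff (hQ _) x).2 (hx _)]
    rw [Finset.sum_const, Finset.card_univ, Nat.cast_smul_eq_nsmul]

end SigmaFromCols

end Matrix

/-- For matrices `Q l` with orthonormal columns and `Q` their horizontal
concatenation, every singular value of `Q` is at most `√L`, and the multiplicity of the
singular value `√L` equals `dim (⋂ l, col (Q l))`. Equivalently (squaring), every
eigenvalue of the symmetric matrix `Q Qᵀ` is at most `L`, and the multiplicity of the
eigenvalue `L` equals `dim (⋂ l, col (Q l))`. -/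
theorem stmt5 (J L : ℕ) (r : Fin L → ℕ)
    (Q : (l : Fin L) → Matrix (Fin J) (Fin (r l)) ℝ)
    (horth : ∀ l, (Q l)ᵀ * Q l = 1)
    (hA : (((Matrix.of fun (i : Fin J) (p : (l : Fin L) × Fin (r l)) => Q p.1 i p.2) *
        (Matrix.of fun (i : Fin J) (p : (l : Fin L) × Fin (r l)) => Q p.1 i p.2)ᵀ)).IsHermitian) :
    (∀ i, hA.eigenvalues i ≤ (L : ℝ)) ∧
    Nat.card {i : Fin J // hA.eigenvalues i = (L : ℝ)}
      = Module.finrank ℝ ↥(⨅ l, LinearMap.range (Q l).mulVecLin) := by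
  have hA_eq := sigmaFromCols_mul_transpose Q
  unfold sigmaFromCols at hA_eq
  constructor
  · refine hA.eigenvalues_le_of_dotProduct_mulVec_le fun x => ?_
    rw [hA_eq]
    simpa using dotProduct_sum_mul_transpose_mulVec_le horth x
  · rw [Nat.card_eq_fintype_card, hA.card_eigenvalues_eq_finrank_eigenspace, hA_eq,
      ← eigenspace_sum_mul_transpose_card horth, Fintype.card_fin]
    rfl
end

section
/- Let X ∈ ℝ^{I_1×⋯×I_N} be a tensor whose n-th unfolding has rank R_n for n = 1,…,N−1. Then X admits a TT decomposition with TT rank exactly (1, R_1, …, R_{N−1}, 1), i.e., there exist cores G^(n) ∈ ℝ^{R_{n−1}×I_n×R_n} (R_0 = R_N = 1) such that x_{i_1⋯i_N} = G^(1)_{:,i_1,:} ⋯ G^(N)_{:,i_N,:}. -/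
/-!
The rows of the `k`-th unfolding, read as functions of the trailing indices, span a space `V k`
of dimension `R k`. Fixing the first trailing index of a row of the `k`-th unfolding gives a row
of the `(k+1)`-th, so fixing it maps `V k` into `V (k+1)`. Choosing spanning families
`b k` of `V k` of size `R k`, with `b 0 = X` and `b N = 1`, every `b k r` with its first trailing
index fixed to `x` expands as `∑ s, G k r x s * b (k+1) s`; chaining these expansions from
`X = b 0` down to `b N = 1` is the TT decomposition.
-/

open Matrix

/-- The `n`-th matrix unfolding `X_{[1,…,n; n+1,…,N]}` of an order-`N` tensor. -/
def unfolding {N : ℕ} (I : Fin N → ℕ) (X : ((m : Fin N) → Fin (I m)) → ℝ) (n : ℕ) :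
    Matrix ((m : {m : Fin N // (m : ℕ) < n}) → Fin (I m.1))
      ((m : {m : Fin N // ¬ (m : ℕ) < n}) → Fin (I m.1)) ℝ :=
  Matrix.of fun a b =>
    X (fun m => if h : (m : ℕ) < n then a ⟨m, h⟩ else b ⟨m, h⟩)

open Finset in
/-- With `v k` as vectors and `c n` as matrices, this says `1ᵀ c₀ ⋯ c_{N-1} v_N = 1ᵀ v₀` when
`v n = c n v (n+1)`. -/
theorem Fin.sum_pi_prod_mul_last {α : Type*} [CommSemiring α] :
    ∀ {N : ℕ} {κ : Fin (N + 1) → Type*} [∀ k, Fintype (κ k)]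
      (v : (k : Fin (N + 1)) → κ k → α) (c : (n : Fin N) → κ n.castSucc → κ n.succ → α),
      (∀ n r, v n.castSucc r = ∑ s, c n r s * v n.succ s) →
      ∑ s : (∀ k, κ k), (∏ n, c n (s n.castSucc) (s n.succ)) * v (last N) (s (last N))
        = ∑ r, v 0 r
  | 0, κ, _, v, _, _ => by
    simp only [univ_eq_empty, prod_empty, one_mul]
    exact Fintype.sum_equiv (@Equiv.piUnique (Fin 1) _ κ) _ _ fun _ => rfl
  | N + 1, κ, _, v, c, h => by
    rw [← (snocEquiv κ).sum_comp, Fintype.sum_prod_type, sum_comm]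
    simp only [snocEquiv_apply, prod_univ_castSucc, snoc_castSucc, succ_castSucc, succ_last,
      snoc_last, mul_assoc, ← mul_sum]
    refine (sum_congr rfl fun s _ => ?_).trans <| sum_pi_prod_mul_last (fun k => v k.castSucc)
      (fun n => c n.castSucc) fun n r => h n.castSucc r
    rw [h (last N)]
    rfl

open Module in
theorem Submodule.exists_fin_family_of_finrank_eq {K M : Type*} [DivisionRing K] [AddCommGroup M]
    [Module K M] (V : Submodule K M) [FiniteDimensional K V] {r : ℕ} (h : finrank K V = r) :
    ∃ b : Fin r → M, (∀ i, b i ∈ V) ∧ V ≤ Submodule.span K (Set.range b) := by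
  let b := Module.finBasisOfFinrankEq K V h
  refine ⟨fun i => b i, fun i => (b i).2, ?_⟩
  have : Set.range (fun i => (b i : M)) = V.subtype '' Set.range b := by
    rw [← Set.range_comp]; rfl
  rw [this, Submodule.span_image, b.span_eq, Submodule.map_subtype_top]

namespace unfolding

variable {N : ℕ} (I : Fin N → ℕ)

abbrev Rows (k : ℕ) := (m : {m : Fin N // (m : ℕ) < k}) → Fin (I m.1)

abbrev Cols (k : ℕ) := (m : {m : Fin N // ¬ (m : ℕ) < k}) → Fin (I m.1)

def tail (k : ℕ) (i : (m : Fin N) → Fin (I m)) : Cols I k := fun m => i m.1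

def consCol (n : Fin N) (x : Fin (I n)) (c : Cols I (n + 1)) : Cols I n :=
  fun m => if h : (m.1 : ℕ) = n then Fin.cast (congrArg I (Fin.ext h)).symm x
    else c ⟨m.1, by have := m.2; omega⟩

def snocRow (n : Fin N) (a : Rows I n) (x : Fin (I n)) : Rows I (n + 1) :=
  fun m => if h : (m.1 : ℕ) < n then a ⟨m.1, h⟩ else
    Fin.cast (congrArg I (Fin.ext (show (m.1 : ℕ) = n by have := m.2; omega))).symm x

theorem consCol_tail (n : Fin N) (i : (m : Fin N) → Fin (I m)) :
    consCol I n (i n) (tail I (n + 1) i) = tail I n i := by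
  funext ⟨m, hm⟩
  by_cases h : (m : ℕ) = n
  · obtain rfl := Fin.ext h
    simp [consCol, tail]
  · simp [consCol, tail, h]

variable (X : ((m : Fin N) → Fin (I m)) → ℝ)

theorem apply_consCol (n : Fin N) (a : Rows I n) (x : Fin (I n)) (c : Cols I (n + 1)) :
    unfolding I X n a (consCol I n x c) = unfolding I X (n + 1) (snocRow I n a x) c := by
  simp only [unfolding, of_apply]
  congr 1
  funext m
  rcases lt_trichotomy (m : ℕ) n with h | h | h
  · simp [snocRow, h, h.trans (Nat.lt_succ_self _)]
  · obtain rfl := Fin.ext h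
    simp [consCol, snocRow]
  · simp [consCol, h.not_gt, h.ne', Nat.not_lt.2 h]

def rowSpace (k : ℕ) : Submodule ℝ (Cols I k → ℝ) :=
  Submodule.span ℝ (Set.range (unfolding I X k).row)

theorem rowSpace_map_consCol_le (n : Fin N) (x : Fin (I n)) :
    (rowSpace I X n).map (LinearMap.funLeft ℝ ℝ (consCol I n x)) ≤ rowSpace I X (n + 1) := by
  rw [rowSpace, Submodule.map_span, Submodule.span_le]
  rintro _ ⟨_, ⟨a, rfl⟩, rfl⟩
  exact Submodule.subset_span ⟨snocRow I n a x, funext fun c => (apply_consCol I X n a x c).symm⟩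

theorem exists_core (n : Fin N) {κ κ' : Type*} [Fintype κ'] {B : κ → Cols I n → ℝ}
    {B' : κ' → Cols I (n + 1) → ℝ} (hB : ∀ r, B r ∈ rowSpace I X n)
    (hB' : rowSpace I X (n + 1) ≤ Submodule.span ℝ (Set.range B')) :
    ∃ g : κ → Fin (I n) → κ' → ℝ, ∀ r x c, B r (consCol I n x c) = ∑ s, g r x s * B' s c := by
  have hshift (r : κ) (x : Fin (I n)) : B r ∘ consCol I n x ∈ Submodule.span ℝ (Set.range B') :=
    hB' (rowSpace_map_consCol_le I X n x ⟨_, hB r, rfl⟩)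
  choose g hg using fun r x => (Submodule.mem_span_range_iff_exists_fun ℝ).1 (hshift r x)
  refine ⟨g, fun r x c => ?_⟩
  simpa using (congrFun (hg r x) c).symm

theorem exists_spanningFamily (hN : 0 < N) (R : Fin (N + 1) → ℕ) (hRN : R (Fin.last N) = 1)
    (hrank : ∀ n : Fin (N + 1), 1 ≤ (n : ℕ) → (n : ℕ) ≤ N - 1 →
      (unfolding I X (n : ℕ)).rank = R n) (k : Fin (N + 1)) :
    ∃ b : Fin (R k) → Cols I k → ℝ,
      ((k : ℕ) = 0 → ∀ r i, b r (tail I k i) = X i) ∧ ((k : ℕ) = N → ∀ r c, b r c = 1) ∧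
      ((k : ℕ) < N → ∀ r, b r ∈ rowSpace I X k) ∧
      (0 < (k : ℕ) → rowSpace I X k ≤ Submodule.span ℝ (Set.range b)) := by
  have hk := k.2
  rcases Nat.eq_zero_or_pos k with h0 | hpos
  · let a₀ : Rows I k := fun m => absurd m.2 (by omega)
    refine ⟨fun _ => (unfolding I X k).row a₀, fun _ r i => ?_, by omega,
      fun _ _ => Submodule.subset_span ⟨a₀, rfl⟩, by omega⟩
    simp [unfolding, tail, h0]
  by_cases hkN : (k : ℕ) = N
  · obtain rfl : k = Fin.last N := Fin.ext hkN
    refine ⟨fun _ _ => 1, by omega, fun _ _ _ => rfl, by omega, fun _ f _ => ?_⟩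
    let c₀ : Cols I N := fun m => absurd m.1.2 m.2
    have hf : f = f c₀ • fun _ => 1 := funext fun c => by
      simp [show c = c₀ from funext fun m => absurd m.1.2 m.2]
    exact hf ▸ Submodule.smul_mem _ _ (Submodule.subset_span ⟨⟨0, by omega⟩, rfl⟩)
  · obtain ⟨b, hb, hspan⟩ := (rowSpace I X k).exists_fin_family_of_finrank_eq
      ((rank_eq_finrank_span_row _).symm.trans (hrank k hpos (by omega)))
    exact ⟨b, by omega, by omega, fun _ => hb, fun _ => hspan⟩

end unfolding

open unfolding in
/-- existence part of the TT-SVD theorem: if the `n`-th unfolding of `X`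
has rank `R n` for `n = 1,…,N-1` (with the convention `R 0 = R N = 1`), then `X` admits
a TT decomposition with cores `G⁽ⁿ⁾ ∈ ℝ^{R_{n-1} × I_n × R_n}`, i.e. entrywise
`x_{i₁⋯i_N} = G⁽¹⁾_{:,i₁,:} ⋯ G⁽ᴺ⁾_{:,i_N,:}`. -/
theorem stmt9 (N : ℕ) (hN : 0 < N) (I : Fin N → ℕ) (R : Fin (N + 1) → ℕ)
    (hR0 : R 0 = 1) (hRN : R (Fin.last N) = 1)
    (X : ((m : Fin N) → Fin (I m)) → ℝ)
    (hrank : ∀ n : Fin (N + 1), 1 ≤ (n : ℕ) → (n : ℕ) ≤ N - 1 →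
      (unfolding I X (n : ℕ)).rank = R n) :
    ∃ G : (n : Fin N) → Fin (R n.castSucc) → Fin (I n) → Fin (R n.succ) → ℝ,
      ∀ i, X i = ∑ s : ((m : Fin (N + 1)) → Fin (R m)),
        ∏ n : Fin N, G n (s n.castSucc) (i n) (s n.succ) := by
  choose B hB0 hBN hmem hspan using exists_spanningFamily I X hN R hRN hrank
  choose G hG using fun n : Fin N =>
    exists_core I X n (hmem n.castSucc n.2) (hspan n.succ n.succ_pos)
  refine ⟨G, fun i => ?_⟩
  have h := Fin.sum_pi_prod_mul_last (fun k r => B k r (tail I k i)) (fun n r s => G n r (i n) s)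
    fun n r => by
      have h := hG n r (i n) (tail I (n + 1) i)
      rwa [consCol_tail] at h
  simp only [hBN (Fin.last N) rfl, mul_one, hB0 0 rfl, Finset.sum_const, Finset.card_univ,
    Fintype.card_fin, hR0, one_smul] at h
  exact h.symm
end

section
/- Let M ∈ ℝ^{J×K} be a rank-R matrix and let {M_obs^(l) = S_r^(l) M S_c^(l)}_{l=1}^L be isorank submatrices (each of rank R). For each l, define S_l = col(S_r^{(l)ᵀ} U^(l)) + col(S̃_r^{(l)ᵀ}) ⊆ ℝ^J, where U^(l) ∈ ℝ^{J_l×R} spans col(M_obs^(l)) and S̃_r^(l) selects the rows of M missing in M_obs^(l). Then col(M) ⊆ ∩_{l=1}^L S_l, and if dim(∩_{l=1}^L S_l) = R then col(M) = ∩_{l=1}^L S_l. -/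
open Matrix

/-- Let `M ∈ ℝ^{J×K}` have rank `R` and let `M_obs l = S_r⁽ˡ⁾ M S_c⁽ˡ⁾`
be isorank submatrices (each of rank `R`), with `U l` spanning `col (M_obs l)`.
The subspace `S l` of all column-space completions consistent with the `l`-th
observation is `{v : ℝ^J | v ∘ α l ∈ col (U l)}` (equivalently
`col (S_r^{(l)ᵀ} U l) + col (S̃_r^{(l)ᵀ})`). Then `col M ⊆ ⋂ l, S l`, and if
`dim (⋂ l, S l) = R` then `col M = ⋂ l, S l`. -/
theorem stmt15 (J K R L : ℕ) (Jl Kl : Fin L → ℕ)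
    (M : Matrix (Fin J) (Fin K) ℝ) (hM : M.rank = R)
    (α : (l : Fin L) → Fin (Jl l) → Fin J) (hα : ∀ l, Function.Injective (α l))
    (β : (l : Fin L) → Fin (Kl l) → Fin K) (hβ : ∀ l, Function.Injective (β l))
    (hiso : ∀ l, (M.submatrix (α l) (β l)).rank = R)
    (U : (l : Fin L) → Matrix (Fin (Jl l)) (Fin R) ℝ)
    (hU : ∀ l, LinearMap.range (U l).mulVecLin
      = LinearMap.range (M.submatrix (α l) (β l)).mulVecLin) :
    LinearMap.range M.mulVecLin ≤
      (⨅ l, (LinearMap.range (U l).mulVecLin).comap (LinearMap.funLeft ℝ ℝ (α l))) ∧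
    (Module.finrank ℝ
        ↥(⨅ l, (LinearMap.range (U l).mulVecLin).comap (LinearMap.funLeft ℝ ℝ (α l))) = R →
      LinearMap.range M.mulVecLin =
        (⨅ l, (LinearMap.range (U l).mulVecLin).comap (LinearMap.funLeft ℝ ℝ (α l)))) := by
  -- A l : the rows of M indexed by α l, all columns
  set A : (l : Fin L) → Matrix (Fin (Jl l)) (Fin K) ℝ :=
    fun l => M.submatrix (α l) id with hA
  -- M.submatrix (α l) (β l) factors through A l
  have hfac : ∀ l, M.submatrix (α l) (β l)
      = A l * (1 : Matrix (Fin K) (Fin K) ℝ).submatrix (Equiv.refl _) (β l) := by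
    intro l
    rw [mul_submatrix_one]
    simp [hA, Matrix.submatrix_submatrix]
  have hle : ∀ l, LinearMap.range (M.submatrix (α l) (β l)).mulVecLin
      ≤ LinearMap.range (A l).mulVecLin := by
    intro l
    rw [hfac l, Matrix.mulVecLin_mul]
    exact LinearMap.range_comp_le_range _ _
  -- rank (A l) ≤ rank M
  have hAfac : ∀ l, A l
      = ((1 : Matrix (Fin J) (Fin J) ℝ).submatrix (α l) (Equiv.refl _)) * M := by
    intro l
    rw [one_submatrix_mul]
    simp [hA]
  have hrankA : ∀ l, (A l).rank = R := by
    intro l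
    refine le_antisymm ?_ ?_
    · rw [hAfac l, ← hM]; exact Matrix.rank_mul_le_right _ _
    · rw [← hiso l]
      rw [Matrix.rank, Matrix.rank]
      exact Submodule.finrank_mono (hle l)
  -- hence equality of column spaces
  have hrangeEq : ∀ l, LinearMap.range (M.submatrix (α l) (β l)).mulVecLin
      = LinearMap.range (A l).mulVecLin := by
    intro l
    apply Submodule.eq_of_le_of_finrank_eq (hle l)
    show Module.finrank ℝ _ = Module.finrank ℝ _
    rw [← Matrix.rank, ← Matrix.rank, hiso l, hrankA l]
  -- main inclusion
  have hincl : LinearMap.range M.mulVecLin ≤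
      (⨅ l, (LinearMap.range (U l).mulVecLin).comap (LinearMap.funLeft ℝ ℝ (α l))) := by
    rw [le_iInf_iff]
    rintro l v ⟨x, rfl⟩
    rw [Submodule.mem_comap, hU l, hrangeEq l]
    refine ⟨x, ?_⟩
    ext i
    simp [hA, Matrix.mulVecLin, LinearMap.funLeft, Matrix.mulVec, dotProduct]
  refine ⟨hincl, fun hdim => ?_⟩
  apply Submodule.eq_of_le_of_finrank_eq hincl
  rw [hdim]
  show Module.finrank ℝ _ = R
  rw [← Matrix.rank, hM]
end
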